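/- arXiv:2302.13411 — 2 statements merged into one kernel-verified Lean document; each statement's English description precedes it below -/
import Mathlib

section
/- Consider the inverse optimization problem with multiple cost functions c^1, …, c^k under the weighted bottleneck Hamming distance objective. Suppose that for each j ∈ [k] the single-cost instance with cost c^j admits a feasible deviation vector, and let δ^j denote the minimum of H_{∞,w} over deviation vectors feasible for cost c^j. Then there exists a deviation vector p* that is simultaneously feasible for all costs c^1, …, c^k and satisfies H_{∞,w}(p*) = max{δ^j : j ∈ [k]}; consequently, the minimum of H_{∞,w} over deviation vectors simultaneously feasible for all k costs is attained and equals max{δ^j : j ∈ [k]}. -/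
/-! Take an optimal deviation vector `p j` for each cost `c j` and combine them pointwise, using
the largest value `max_j p j s` on `F*` and the smallest `min_j p j s` off `F*`. Each value is
attained by some `p j`, so the bounds hold and the support lies in the union of the supports,
which bounds the bottleneck distance by `max_j δ j`. Raising the deviation on `F*` and lowering
it elsewhere only lowers the cost of `F*` relative to every other `F`, so the combination stays
feasible for every cost; feasibility for the cost attaining `max_j δ j` then gives equality and
optimality. -/

open Finset

noncomputable section

variable {S : Type*}

/-- A deviation vector `p` is feasible: it respects the bounds `l ≤ p ≤ u`
(interpreted in the extended reals) and makes `Fstar` a minimum-cost member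
of `𝓕` with respect to `c - p`. -/
def IsFeasibleDev (𝓕 : Finset (Finset S)) (Fstar : Finset S)
    (c : S → ℝ) (l u : S → EReal) (p : S → ℝ) : Prop :=
  (∀ s, l s ≤ (p s : EReal) ∧ (p s : EReal) ≤ u s) ∧
  ∀ F ∈ 𝓕, ∑ s ∈ Fstar, (c s - p s) ≤ ∑ s ∈ F, (c s - p s)

/-- The weighted bottleneck Hamming distance `H_{∞,w}(p) = max {w(s) : p(s) ≠ 0}`,
with the maximum over the empty set taken to be `0`. -/
def Hbot [Fintype S] (w p : S → ℝ) : ℝ :=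
  WithBot.unbotD 0 ((((univ : Finset S).filter fun s => p s ≠ 0)).image w).max

/-- The constant `m` from the bottleneck Hamming distance setting. -/
def mB [DecidableEq S] (𝓕 : Finset (Finset S)) (Fstar : Finset S)
    (c : S → ℝ) (l u : S → EReal) : ℝ :=
  max 0 (WithBot.unbotD 0 (𝓕.image fun F =>
    (∑ s ∈ Fstar, c s) - (∑ s ∈ F, c s)
      - ∑ s ∈ (Fstar \ F).filter (fun s => u s < 0), (u s).toReal
      + ∑ s ∈ (F \ Fstar).filter (fun s => 0 < l s), (l s).toReal).max)

/-- The special deviation vector `p^δ` of the bottleneck Hamming distance setting. -/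
def pB [DecidableEq S] (𝓕 : Finset (Finset S)) (Fstar : Finset S)
    (c : S → ℝ) (l u : S → EReal) (w : S → ℝ) (δ : ℝ) (s : S) : ℝ :=
  if w s ≤ δ then
    if s ∈ Fstar then (if u s = ⊤ then mB 𝓕 Fstar c l u else (u s).toReal)
    else (if l s = ⊥ then -(mB 𝓕 Fstar c l u) else (l s).toReal)
  else 0

lemma Hbot_le [Fintype S] {w p : S → ℝ} {b : ℝ} (hb : 0 ≤ b)
    (h : ∀ s, p s ≠ 0 → w s ≤ b) : Hbot w p ≤ b := by
  unfold Hbot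
  cases hm : (((univ : Finset S).filter fun s => p s ≠ 0).image w).max with
  | bot => simpa using hb
  | coe a =>
    obtain ⟨s, hs, rfl⟩ := mem_image.mp (mem_of_max hm)
    exact h s (mem_filter.mp hs).2

lemma le_Hbot [Fintype S] {w p : S → ℝ} {s : S} (h : p s ≠ 0) : w s ≤ Hbot w p := by
  have hmax : (w s : WithBot ℝ) ≤ (((univ : Finset S).filter fun s => p s ≠ 0).image w).max :=
    le_max (mem_image_of_mem _ (mem_filter.mpr ⟨mem_univ s, h⟩))
  unfold Hbot
  cases hm : (((univ : Finset S).filter fun s => p s ≠ 0).image w).max with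
  | bot => simp [hm] at hmax
  | coe a => rw [hm] at hmax; exact_mod_cast hmax

lemma Hbot_nonneg [Fintype S] {w : S → ℝ} (hw : ∀ s, 0 < w s) (p : S → ℝ) : 0 ≤ Hbot w p := by
  unfold Hbot
  cases hm : (((univ : Finset S).filter fun s => p s ≠ 0).image w).max with
  | bot => simp
  | coe a =>
    obtain ⟨s, _, rfl⟩ := mem_image.mp (mem_of_max hm)
    exact (hw s).le

lemma Finset.sum_le_sum_of_nonpos_of_nonneg {α : Type*} {f : α → ℝ} (A B : Finset α)
    (hA : ∀ s ∈ A, f s ≤ 0) (hB : ∀ s ∉ A, 0 ≤ f s) : ∑ s ∈ A, f s ≤ ∑ s ∈ B, f s := by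
  classical
  rw [← sub_nonpos, ← sum_sdiff_sub_sum_sdiff]
  have hAB : ∑ s ∈ A \ B, f s ≤ 0 := sum_nonpos fun s hs => hA s (mem_sdiff.mp hs).1
  have hBA : 0 ≤ ∑ s ∈ B \ A, f s := sum_nonneg fun s hs => hB s (mem_sdiff.mp hs).2
  linarith

lemma IsFeasibleDev.of_le_of_ge {𝓕 : Finset (Finset S)} {Fstar : Finset S} {c : S → ℝ}
    {l u : S → EReal} {p q : S → ℝ} (hp : IsFeasibleDev 𝓕 Fstar c l u p)
    (hbounds : ∀ s, l s ≤ (q s : EReal) ∧ (q s : EReal) ≤ u s)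
    (hmem : ∀ s ∈ Fstar, p s ≤ q s) (hnotMem : ∀ s ∉ Fstar, q s ≤ p s) :
    IsFeasibleDev 𝓕 Fstar c l u q := by
  refine ⟨hbounds, fun F hF => ?_⟩
  have hshift : ∑ s ∈ Fstar, (p s - q s) ≤ ∑ s ∈ F, (p s - q s) :=
    sum_le_sum_of_nonpos_of_nonneg Fstar F (fun s hs => sub_nonpos.mpr (hmem s hs))
      (fun s hs => sub_nonneg.mpr (hnotMem s hs))
  have hcost := hp.2 F hF
  have hsplit : ∀ G : Finset S,
      ∑ s ∈ G, (c s - q s) = ∑ s ∈ G, (c s - p s) + ∑ s ∈ G, (p s - q s) := fun G => by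
    rw [← sum_add_distrib]; exact sum_congr rfl fun s _ => by ring
  rw [hsplit, hsplit]
  linarith

section supInfDev

variable {J : Type*} [Fintype J] [Nonempty J]

open Classical in
def supInfDev (Fstar : Finset S) (p : J → S → ℝ) (s : S) : ℝ :=
  if s ∈ Fstar then univ.sup' univ_nonempty (p · s) else univ.inf' univ_nonempty (p · s)

lemma le_supInfDev {Fstar : Finset S} {s : S} (hs : s ∈ Fstar) (p : J → S → ℝ) (j : J) :
    p j s ≤ supInfDev Fstar p s := by
  rw [supInfDev, if_pos hs]
  exact le_sup' (p · s) (mem_univ j)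

lemma supInfDev_le {Fstar : Finset S} {s : S} (hs : s ∉ Fstar) (p : J → S → ℝ) (j : J) :
    supInfDev Fstar p s ≤ p j s := by
  rw [supInfDev, if_neg hs]
  exact inf'_le (p · s) (mem_univ j)

lemma exists_supInfDev_eq (Fstar : Finset S) (p : J → S → ℝ) (s : S) :
    ∃ j, supInfDev Fstar p s = p j s := by
  unfold supInfDev
  split_ifs
  · obtain ⟨j, -, hj⟩ := exists_mem_eq_sup' univ_nonempty (p · s)
    exact ⟨j, hj⟩
  · obtain ⟨j, -, hj⟩ := exists_mem_eq_inf' univ_nonempty (p · s)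
    exact ⟨j, hj⟩

lemma isFeasibleDev_supInfDev {𝓕 : Finset (Finset S)} {Fstar : Finset S} {c : J → S → ℝ}
    {l u : S → EReal} {p : J → S → ℝ} (hp : ∀ j, IsFeasibleDev 𝓕 Fstar (c j) l u (p j))
    (j : J) : IsFeasibleDev 𝓕 Fstar (c j) l u (supInfDev Fstar p) := by
  refine (hp j).of_le_of_ge (fun s => ?_) (fun s hs => le_supInfDev hs p j)
    (fun s hs => supInfDev_le hs p j)
  obtain ⟨i, hi⟩ := exists_supInfDev_eq Fstar p s
  rw [hi]
  exact (hp i).1 s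

lemma Hbot_supInfDev_le [Fintype S] {w : S → ℝ} (hw : ∀ s, 0 < w s) (Fstar : Finset S)
    (p : J → S → ℝ) :
    Hbot w (supInfDev Fstar p) ≤ univ.sup' univ_nonempty fun j => Hbot w (p j) := by
  have hbound_nonneg : 0 ≤ univ.sup' univ_nonempty fun j => Hbot w (p j) :=
    (Hbot_nonneg hw _).trans (le_sup' (fun j => Hbot w (p j)) (mem_univ (Classical.arbitrary J)))
  refine Hbot_le hbound_nonneg fun s hs => ?_
  obtain ⟨j, hj⟩ := exists_supInfDev_eq Fstar p s
  exact (le_Hbot (hj ▸ hs)).trans (le_sup' (fun j => Hbot w (p j)) (mem_univ j))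

end supInfDev

theorem bottleneck_multiple_costs_general [Fintype S]
    {J : Type*} [Fintype J] [Nonempty J]
    (𝓕 : Finset (Finset S)) (Fstar : Finset S) (c : J → S → ℝ) (w : S → ℝ)
    (l u : S → EReal)
    (hw : ∀ s, 0 < w s)
    (δ : J → ℝ)
    (hδ : ∀ j, (∃ p : S → ℝ, IsFeasibleDev 𝓕 Fstar (c j) l u p ∧ Hbot w p = δ j) ∧
      (∀ p : S → ℝ, IsFeasibleDev 𝓕 Fstar (c j) l u p → δ j ≤ Hbot w p)) :
    ∃ pstar : S → ℝ, (∀ j, IsFeasibleDev 𝓕 Fstar (c j) l u pstar) ∧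
      Hbot w pstar = (univ : Finset J).sup' univ_nonempty δ ∧
      ∀ q : S → ℝ, (∀ j, IsFeasibleDev 𝓕 Fstar (c j) l u q) →
        Hbot w pstar ≤ Hbot w q := by
  choose p hfeas hH using fun j => (hδ j).1
  have hfeasP := isFeasibleDev_supInfDev hfeas
  obtain ⟨jmax, -, hjmax⟩ := exists_mem_eq_sup' univ_nonempty δ
  have hδmax_le : ∀ q, (∀ j, IsFeasibleDev 𝓕 Fstar (c j) l u q) →
      univ.sup' univ_nonempty δ ≤ Hbot w q := fun q hq => hjmax ▸ (hδ jmax).2 q (hq jmax)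
  have hHP : Hbot w (supInfDev Fstar p) = univ.sup' univ_nonempty δ := by
    refine le_antisymm ?_ (hδmax_le _ hfeasP)
    simpa only [hH] using Hbot_supInfDev_le hw Fstar p
  exact ⟨supInfDev Fstar p, hfeasP, hHP, fun q hq => hHP ▸ hδmax_le q hq⟩

theorem bottleneck_multiple_costs [Fintype S] [DecidableEq S]
    {J : Type*} [Fintype J] [Nonempty J]
    (𝓕 : Finset (Finset S)) (Fstar : Finset S) (c : J → S → ℝ) (w : S → ℝ)
    (l u : S → EReal)
    (hw : ∀ s, 0 < w s) (hl : ∀ s, l s ≠ ⊤) (hu : ∀ s, u s ≠ ⊥)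
    (hlu : ∀ s, l s ≤ u s) (h𝓕 : 𝓕.Nonempty) (hF : Fstar ∈ 𝓕)
    (δ : J → ℝ)
    (hδ : ∀ j, (∃ p : S → ℝ, IsFeasibleDev 𝓕 Fstar (c j) l u p ∧ Hbot w p = δ j) ∧
      (∀ p : S → ℝ, IsFeasibleDev 𝓕 Fstar (c j) l u p → δ j ≤ Hbot w p)) :
    ∃ pstar : S → ℝ, (∀ j, IsFeasibleDev 𝓕 Fstar (c j) l u pstar) ∧
      Hbot w pstar = (univ : Finset J).sup' univ_nonempty δ ∧
      ∀ q : S → ℝ, (∀ j, IsFeasibleDev 𝓕 Fstar (c j) l u q) →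
        Hbot w pstar ≤ Hbot w q :=
  bottleneck_multiple_costs_general 𝓕 Fstar c w l u hw δ hδ
end
end

section
/- Let d := max{ 0, max{ (c^j(F*) − c^j(F)) / ( (1/w)(F* △ F) ) : j ∈ [k], F ∈ 𝓕, F ≠ F* } } (inner maximum over an empty index set taken to be −∞), and define p^d : S → ℝ by p^d(s) = d/w(s) for s ∈ F* and p^d(s) = −d/w(s) for s ∈ S\F*. Then p^d is a feasible deviation vector for the unconstrained multi-cost problem, i.e., (c^j − p^d)(F*) ≤ (c^j − p^d)(F) for every j ∈ [k] and every F ∈ 𝓕. -/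
/-!
Subtracting `p^d` from a cost function lowers `c(F*) - c(F)` by exactly `d · (1/w)(F* △ F)`:
elements of `F* ∩ F` cancel, and each `s ∈ F* △ F` contributes `d / w(s)`. By the choice of `d`
this is at least the gap `c(F*) - c(F)` whenever `F ≠ F*`.
-/

open Finset

noncomputable section

variable {S : Type*}

/-- The weighted ℓ∞-norm `‖p‖_{∞,w} = max_{s ∈ S} w(s)·|p(s)|`. -/
def normI [Fintype S] [Nonempty S] (w p : S → ℝ) : ℝ :=
  (univ : Finset S).sup' univ_nonempty fun s => w s * |p s|

/-- The special deviation vector `p^δ` of the weighted ℓ∞-norm setting: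
`δ/w(s)` clamped to `[ℓ(s), u(s)]` on `F*`, and `-δ/w(s)` clamped to
`[ℓ(s), u(s)]` outside of `F*`. -/
def pI [DecidableEq S] (Fstar : Finset S) (l u : S → EReal) (w : S → ℝ) (δ : ℝ) (s : S) : ℝ :=
  if s ∈ Fstar then
    if ((δ / w s : ℝ) : EReal) < l s then (l s).toReal
    else if u s < ((δ / w s : ℝ) : EReal) then (u s).toReal
    else δ / w s
  else
    if ((-(δ / w s) : ℝ) : EReal) < l s then (l s).toReal
    else if u s < ((-(δ / w s) : ℝ) : EReal) then (u s).toReal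
    else -(δ / w s)

/-- The min-max bound: `max{0, max{(cʲ(F*) − cʲ(F)) / (1/w)(F* △ F) : j, F ∈ 𝓕, F ≠ F*}}`. -/
def minmaxBound [DecidableEq S] {J : Type*} [Fintype J]
    (𝓕 : Finset (Finset S)) (Fstar : Finset S) (c : J → S → ℝ) (w : S → ℝ) : ℝ :=
  max 0 ((((univ : Finset J) ×ˢ (𝓕.erase Fstar)).image fun jF =>
    ((∑ s ∈ Fstar, c jF.1 s) - (∑ s ∈ jF.2, c jF.1 s)) /
      (∑ s ∈ (Fstar \ jF.2) ∪ (jF.2 \ Fstar), (w s)⁻¹)).max.unbotD 0)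

section

variable [DecidableEq S]

lemma div_le_minmaxBound {J : Type*} [Fintype J] {𝓕 : Finset (Finset S)} {Fstar F : Finset S}
    (c : J → S → ℝ) (w : S → ℝ) (j : J) (hF : F ∈ 𝓕) (hne : F ≠ Fstar) :
    ((∑ s ∈ Fstar, c j s) - ∑ s ∈ F, c j s) / ∑ s ∈ (Fstar \ F) ∪ (F \ Fstar), (w s)⁻¹ ≤
      minmaxBound 𝓕 Fstar c w :=
  le_max_of_le_right <| WithBot.le_unbotD <| Finset.le_max <|
    mem_image.2 ⟨(j, F), mem_product.2 ⟨mem_univ j, mem_erase.2 ⟨hne, hF⟩⟩, rfl⟩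

lemma sum_inv_symmDiff_pos {w : S → ℝ} (hw : ∀ s, 0 < w s) {A B : Finset S} (hne : B ≠ A) :
    0 < ∑ s ∈ (A \ B) ∪ (B \ A), (w s)⁻¹ := by
  refine sum_pos (fun s _ => inv_pos.2 (hw s)) ?_
  rw [nonempty_iff_ne_empty, Ne, union_eq_empty, sdiff_eq_empty_iff_subset,
    sdiff_eq_empty_iff_subset]
  exact fun h => hne (h.2.antisymm h.1)

lemma sum_sub_sum_signed_eq (A B : Finset S) (w : S → ℝ) (d : ℝ) :
    ∑ s ∈ A, (if s ∈ A then d / w s else -(d / w s)) -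
      ∑ s ∈ B, (if s ∈ A then d / w s else -(d / w s)) =
      d * ∑ s ∈ (A \ B) ∪ (B \ A), (w s)⁻¹ := by
  rw [← sum_sdiff_sub_sum_sdiff, sum_union disjoint_sdiff_sdiff, mul_add,
    sum_congr rfl fun s hs => if_pos (mem_sdiff.1 hs).1,
    sum_congr rfl fun s hs => if_neg (mem_sdiff.1 hs).2]
  simp only [sum_neg_distrib, mul_sum, div_eq_mul_inv, sub_neg_eq_add]

end

theorem linf_unconstrained_pd_feasible_general [DecidableEq S]
    {J : Type*} [Fintype J]
    (𝓕 : Finset (Finset S)) (Fstar : Finset S) (c : J → S → ℝ) (w : S → ℝ)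
    (hw : ∀ s, 0 < w s) :
    ∀ j, ∀ F ∈ 𝓕,
      (∑ s ∈ Fstar, (c j s -
        (if s ∈ Fstar then minmaxBound 𝓕 Fstar c w / w s
          else -(minmaxBound 𝓕 Fstar c w / w s)))) ≤
      (∑ s ∈ F, (c j s -
        (if s ∈ Fstar then minmaxBound 𝓕 Fstar c w / w s
          else -(minmaxBound 𝓕 Fstar c w / w s)))) := by
  intro j F hF
  rcases eq_or_ne F Fstar with rfl | hne
  · exact le_rfl
  have hgap := (div_le_iff₀ (sum_inv_symmDiff_pos hw hne)).1 (div_le_minmaxBound c w j hF hne)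
  have hdev := sum_sub_sum_signed_eq Fstar F w (minmaxBound 𝓕 Fstar c w)
  rw [sum_sub_distrib, sum_sub_distrib]
  linarith

theorem linf_unconstrained_pd_feasible [Fintype S] [DecidableEq S]
    {J : Type*} [Fintype J] [Nonempty J]
    (𝓕 : Finset (Finset S)) (Fstar : Finset S) (c : J → S → ℝ) (w : S → ℝ)
    (hw : ∀ s, 0 < w s) (h𝓕 : 𝓕.Nonempty) (hF : Fstar ∈ 𝓕) :
    ∀ j, ∀ F ∈ 𝓕,
      (∑ s ∈ Fstar, (c j s -
        (if s ∈ Fstar then minmaxBound 𝓕 Fstar c w / w s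
          else -(minmaxBound 𝓕 Fstar c w / w s)))) ≤
      (∑ s ∈ F, (c j s -
        (if s ∈ Fstar then minmaxBound 𝓕 Fstar c w / w s
          else -(minmaxBound 𝓕 Fstar c w / w s)))) :=
  linf_unconstrained_pd_feasible_general 𝓕 Fstar c w hw
end
end
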